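/- arXiv:2603.11301 — 3 statements merged into one kernel-verified Lean document; each statement's English description precedes it below -/
import Mathlib

section
/- For every α ∈ (0,1), every f ∈ 𝒱₁, and every x > 0, one has c(f) ≤ ((1+2α)/(3(1−α)))·c_{1,α}·(1−f(x))^{min(1−α,α)}·(1 + x^{−2α}). -/
open Real MeasureTheory Set Filter BoundedContinuousFunction

noncomputable section

namespace GSQGplane

/-- The constant `c_{1,α} = 2^{2α-1} Γ(1/2+α) / (√π Γ(1-α))`. -/
def C1 (α : ℝ) : ℝ :=
  (2:ℝ) ^ (2*α - 1) * Real.Gamma (1/2 + α) / (Real.sqrt π * Real.Gamma (1 - α))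

/-- The constant `η = 2 (3/(2(3-2α)(5-2α)(1+4^α)))^{1/min(α,1-α)}`. -/
def etaC (α : ℝ) : ℝ :=
  2 * (3 / (2*(3 - 2*α)*(5 - 2*α)*(1 + (4:ℝ) ^ α))) ^ (1 / min α (1 - α))

/-- The weight `ρ(x) = (1+|x|)^{-α}`. -/
def rho (α : ℝ) (x : ℝ) : ℝ := (1 + |x|) ^ (-α)

/-- The invariant set `𝒱₁`: even continuous functions with finite weighted sup-norm,
`f(0)=1`, nonnegative and non-increasing on `[0,∞)`, `x ↦ f(√x)` convex,
`f ≥ max(0,1-x²)`, and left derivative at `1/2` at most `-η`. -/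
def V1 (α : ℝ) (f : ℝ → ℝ) : Prop :=
  Continuous f ∧ (∀ x : ℝ, f (-x) = f x) ∧ (∃ M : ℝ, ∀ x : ℝ, rho α x * |f x| ≤ M) ∧
  f 0 = 1 ∧ (∀ x ∈ Ici (0:ℝ), 0 ≤ f x) ∧ AntitoneOn f (Ici (0:ℝ)) ∧
  ConvexOn ℝ (Ici (0:ℝ)) (fun x => f (Real.sqrt x)) ∧
  (∀ x : ℝ, max 0 (1 - x^2) ≤ f x) ∧
  (∃ d : ℝ, HasDerivWithinAt f d (Iio (1/2 : ℝ)) (1/2 : ℝ) ∧ d ≤ -(etaC α))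

/-- The normalization functional `c(f)`. -/
def cV (α : ℝ) (f : ℝ → ℝ) : ℝ :=
  (2*α*(1+2*α)/3) * C1 α * ∫ ξ in Ioi (0:ℝ), (1 - f ξ) * ξ ^ (-1 - 2*α)

/-- The functional `b(f) = 2 c_{1,α} ∫₀^∞ f(ξ) ξ^{1-2α} dξ`. -/
def bV (α : ℝ) (f : ℝ → ℝ) : ℝ :=
  2 * C1 α * ∫ ξ in Ioi (0:ℝ), f ξ * ξ ^ (1 - 2*α)

/-- The linear operator `𝒯_α(f)`, defined for `x > 0`, set to `0` at `x = 0`,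
and extended evenly to `ℝ` (via `|x|`). -/
def TV (α : ℝ) (f : ℝ → ℝ) (x : ℝ) : ℝ :=
  if x = 0 then 0
  else if α = 1/2 then
    C1 α * ∫ ξ in Ioi (0:ℝ), f ξ * ((ξ / |x|) * Real.log ((|x| + ξ) / |(|x| - ξ)|) - 2)
  else
    (C1 α / (1 - 2*α)) * ∫ ξ in Ioi (0:ℝ),
      f ξ * ((ξ / |x|) * ((|x| + ξ) ^ (1 - 2*α) - |(|x| - ξ)| ^ (1 - 2*α))
        - 2*(1 - 2*α) * ξ ^ (1 - 2*α))

/-- The nonlinear map `ℛ_α(f)(x) = max(0, 1 + 𝒯_α(f)(x)/c(f))`. -/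
def RV (α : ℝ) (f : ℝ → ℝ) (x : ℝ) : ℝ := max 0 (1 + TV α f x / cV α f)

lemma C1_nonneg (α : ℝ) (hα : α ∈ Ioo (0:ℝ) 1) : 0 ≤ C1 α := by
  have h1 : 0 < Real.Gamma (1/2 + α) := Real.Gamma_pos_of_pos (by linarith [hα.1])
  have h2 : 0 < Real.Gamma (1 - α) := Real.Gamma_pos_of_pos (by linarith [hα.2])
  have h3 : (0:ℝ) < (2:ℝ) ^ (2*α - 1) := Real.rpow_pos_of_pos (by norm_num) _
  have h4 : (0:ℝ) < Real.sqrt π := Real.sqrt_pos.2 Real.pi_pos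
  unfold C1
  positivity

lemma keyInt (α : ℝ) (hα : α ∈ Ioo (0:ℝ) 1) (c : ℝ) (hc : 0 < c) :
    IntegrableOn (fun ξ => min (ξ^2) (c^2) * ξ ^ (-1 - 2*α)) (Ioi (0:ℝ)) ∧
    ∫ ξ in Ioi (0:ℝ), min (ξ^2) (c^2) * ξ ^ (-1 - 2*α) = c ^ (2-2*α) / (2*α*(1-α)) := by
  obtain ⟨hα0, hα1⟩ := hα
  have hlow : ∀ ξ ∈ Ioc (0:ℝ) c, min (ξ^2) (c^2) * ξ ^ (-1 - 2*α) = ξ ^ (1 - 2*α) := by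
    intro ξ hξ
    have h1 : ξ^2 ≤ c^2 := by nlinarith [hξ.1, hξ.2]
    rw [min_eq_left h1]
    rw [show (ξ:ℝ)^2 = ξ ^ ((2:ℕ):ℝ) by rw [Real.rpow_natCast],
      ← Real.rpow_add hξ.1]
    congr 1; ring
  have hhigh : ∀ ξ ∈ Ioi c, min (ξ^2) (c^2) * ξ ^ (-1 - 2*α) = c^2 * ξ ^ (-1 - 2*α) := by
    intro ξ hξ
    have h1 : c^2 ≤ ξ^2 := by nlinarith [mem_Ioi.mp hξ]
    rw [min_eq_right h1]
  have hInt1 : IntegrableOn (fun ξ => min (ξ^2) (c^2) * ξ ^ (-1 - 2*α)) (Ioc (0:ℝ) c) := by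
    refine (IntegrableOn.congr_fun ?_ (fun ξ hξ => (hlow ξ hξ).symm) measurableSet_Ioc)
    have := (intervalIntegral.intervalIntegrable_rpow' (a := 0) (b := c) (r := 1 - 2*α) (by linarith))
    rwa [intervalIntegrable_iff_integrableOn_Ioc_of_le hc.le] at this
  have hInt2 : IntegrableOn (fun ξ => min (ξ^2) (c^2) * ξ ^ (-1 - 2*α)) (Ioi c) := by
    refine (IntegrableOn.congr_fun ?_ (fun ξ hξ => (hhigh ξ hξ).symm) measurableSet_Ioi)
    exact (integrableOn_Ioi_rpow_of_lt (by linarith) hc).const_mul _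
  have hunion : Ioc (0:ℝ) c ∪ Ioi c = Ioi 0 := Ioc_union_Ioi_eq_Ioi hc.le
  have hInt : IntegrableOn (fun ξ => min (ξ^2) (c^2) * ξ ^ (-1 - 2*α)) (Ioi (0:ℝ)) := by
    rw [← hunion]; exact hInt1.union hInt2
  refine ⟨hInt, ?_⟩
  have hsplit : ∫ ξ in Ioi (0:ℝ), min (ξ^2) (c^2) * ξ ^ (-1 - 2*α)
      = (∫ ξ in Ioc (0:ℝ) c, min (ξ^2) (c^2) * ξ ^ (-1 - 2*α))
        + ∫ ξ in Ioi c, min (ξ^2) (c^2) * ξ ^ (-1 - 2*α) := by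
    rw [← hunion]
    exact setIntegral_union (Ioc_disjoint_Ioi le_rfl) measurableSet_Ioi hInt1 hInt2
  have e1 : ∫ ξ in Ioc (0:ℝ) c, min (ξ^2) (c^2) * ξ ^ (-1 - 2*α) = c ^ (2 - 2*α) / (2 - 2*α) := by
    rw [setIntegral_congr_fun measurableSet_Ioc hlow,
      ← intervalIntegral.integral_of_le hc.le,
      integral_rpow (Or.inl (by linarith))]
    rw [Real.zero_rpow (by norm_num; intro h; linarith)]
    ring_nf
  have e2 : ∫ ξ in Ioi c, min (ξ^2) (c^2) * ξ ^ (-1 - 2*α) = c ^ (2 - 2*α) / (2*α) := by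
    rw [setIntegral_congr_fun measurableSet_Ioi hhigh, MeasureTheory.integral_const_mul,
      integral_Ioi_rpow_of_lt (by linarith) hc]
    rw [show (-1 - 2*α) + 1 = -(2*α) by ring, neg_div_neg_eq,
      show (c:ℝ)^2 = c ^ ((2:ℕ):ℝ) from (Real.rpow_natCast c 2).symm,
      ← mul_div_assoc, ← Real.rpow_add hc]
    push_cast
    rw [show (2:ℝ) + -(2*α) = 2 - 2*α by ring]
  rw [hsplit, e1, e2]
  have h2 : α ≠ 0 := ne_of_gt hα0
  have h3 : (1:ℝ) - α ≠ 0 := by intro h; linarith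
  have h4 : (2:ℝ) - 2*α ≠ 0 := by intro h; linarith
  field_simp
  ring

theorem cV_le' (α : ℝ) (hα : α ∈ Ioo (0:ℝ) 1) (f : ℝ → ℝ)
    (hf0 : f 0 = 1) (hnn : ∀ x ∈ Ici (0:ℝ), 0 ≤ f x) (hanti : AntitoneOn f (Ici (0:ℝ)))
    (hconv : ConvexOn ℝ (Ici (0:ℝ)) (fun x => f (Real.sqrt x)))
    (hlb : ∀ x : ℝ, max 0 (1 - x^2) ≤ f x)
    (x : ℝ) (hx : 0 < x) :
    (2*α*(1+2*α)/3) * C1 α * ∫ ξ in Ioi (0:ℝ), (1 - f ξ) * ξ ^ (-1 - 2*α)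
      ≤ (1 + 2*α) / (3*(1 - α)) * C1 α *
      (1 - f x) ^ min (1 - α) α * (1 + x ^ (-(2*α))) := by
  obtain ⟨hα0, hα1⟩ := hα
  set t := 1 - f x with htdef
  have hfx1 : f x ≤ 1 := by
    rw [← hf0]; exact hanti (mem_Ici.2 le_rfl) (mem_Ici.2 hx.le) hx.le
  have ht0 : 0 ≤ t := by simp [htdef]; linarith
  have ht1 : t ≤ 1 := by
    have := hnn x (mem_Ici.2 hx.le); simp [htdef]; linarith
  have hgsq : ∀ ξ : ℝ, 1 - f ξ ≤ ξ^2 := by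
    intro ξ; have := le_max_right (0:ℝ) (1 - ξ^2) |>.trans (hlb ξ); linarith
  have hg0 : ∀ ξ : ℝ, 0 ≤ ξ → 1 - f ξ ≥ 0 := by
    intro ξ hξ
    have : f ξ ≤ f 0 := hanti (mem_Ici.2 le_rfl) (mem_Ici.2 hξ) hξ
    rw [hf0] at this; linarith
  have hgmono : ∀ ξ : ℝ, 0 < ξ → ξ ≤ x → 1 - f ξ ≤ t := by
    intro ξ h1 h2
    have := hanti (mem_Ici.2 h1.le) (mem_Ici.2 hx.le) h2
    simp [htdef]; linarith
  have hconvbd : ∀ ξ : ℝ, x ≤ ξ → x^2 * (1 - f ξ) ≤ t * ξ^2 := by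
    intro ξ hξ
    have hξ0 : 0 < ξ := lt_of_lt_of_le hx hξ
    have hξ2 : (0:ℝ) < ξ^2 := by positivity
    set l := x^2 / ξ^2 with hl
    have hl0 : 0 ≤ l := by positivity
    have hl1 : l ≤ 1 := by
      rw [hl, div_le_one hξ2]; nlinarith
    have key := hconv.2 (mem_Ici.2 le_rfl) (mem_Ici.2 (sq_nonneg ξ))
      (by linarith : (0:ℝ) ≤ 1 - l) hl0 (by ring)
    have hsm : (1 - l) • (0:ℝ) + l • ξ^2 = x^2 := by
      simp [smul_eq_mul, hl]; field_simp
    rw [hsm] at key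
    simp only [smul_eq_mul, Real.sqrt_sq hx.le, Real.sqrt_zero, hf0,
      Real.sqrt_sq hξ0.le] at key
    -- key : f x ≤ (1 - l) * 1 + l * f ξ
    have : l * (1 - f ξ) ≤ t := by simp only [htdef]; nlinarith
    have h2 := mul_le_mul_of_nonneg_right this hξ2.le
    rw [hl] at h2
    calc x^2 * (1 - f ξ) = x^2 / ξ^2 * (1 - f ξ) * ξ^2 := by field_simp
    _ ≤ t * ξ^2 := h2
  have hmeq : min (1-α) α ≠ 0 := by
    rcases min_cases (1-α) α with ⟨h,_⟩|⟨h,_⟩ <;> rw [h] <;> intro hh <;> linarith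
  have hC := C1_nonneg α ⟨hα0, hα1⟩
  rcases eq_or_lt_of_le ht0 with hteq | htpos
  · -- t = 0 case: integral is 0
    have hzero : EqOn (fun ξ => (1 - f ξ) * ξ ^ (-1 - 2*α)) (fun _ => (0:ℝ)) (Ioi 0) := by
      intro ξ hξ
      have hξ0 : (0:ℝ) < ξ := hξ
      have hg : 1 - f ξ = 0 := by
        rcases le_or_gt ξ x with h | h
        · have := hgmono ξ hξ0 h; have := hg0 ξ hξ0.le; linarith
        · have := hconvbd ξ h.le
          have h2 : x^2 * (1 - f ξ) ≤ 0 := by nlinarith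
          have h3 := hg0 ξ hξ0.le
          have hx2 : (0:ℝ) < x^2 := by positivity
          nlinarith
      simp [hg]
    rw [setIntegral_congr_fun measurableSet_Ioi hzero]
    simp only [integral_zero, mul_zero]
    rw [← hteq, Real.zero_rpow hmeq]
    simp
  · -- t > 0 case
    set a := Real.sqrt t with ha
    set b := x / Real.sqrt t with hb
    have hap : 0 < a := Real.sqrt_pos.2 htpos
    have hbp : 0 < b := by positivity
    have ha2 : a^2 = t := Real.sq_sqrt ht0
    have hKa := keyInt α ⟨hα0, hα1⟩ a hap
    have hKb := keyInt α ⟨hα0, hα1⟩ b hbp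
    set M : ℝ → ℝ := fun ξ => min (ξ^2) (a^2) * ξ ^ (-1 - 2*α)
        + (t/x^2) * (min (ξ^2) (b^2) * ξ ^ (-1 - 2*α)) with hM
    have hIntM : IntegrableOn M (Ioi (0:ℝ)) := hKa.1.add (hKb.1.const_mul _)
    have hpt : ∀ ξ ∈ Ioi (0:ℝ), (1 - f ξ) * ξ ^ (-1 - 2*α) ≤ M ξ := by
      intro ξ hξ
      have hξ0 : (0:ℝ) < ξ := hξ
      have hp : (0:ℝ) < ξ ^ (-1 - 2*α) := Real.rpow_pos_of_pos hξ0 _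
      have hmin1 : (0:ℝ) ≤ min (ξ^2) (a^2) := le_min (sq_nonneg _) (sq_nonneg _)
      have hmin2 : (0:ℝ) ≤ min (ξ^2) (b^2) := le_min (sq_nonneg _) (sq_nonneg _)
      rcases le_or_gt ξ x with h | h
      · have hg : 1 - f ξ ≤ min (ξ^2) (a^2) := by
          rw [ha2]; exact le_min (hgsq ξ) (hgmono ξ hξ0 h)
        have : (1 - f ξ) * ξ ^ (-1 - 2*α) ≤ min (ξ^2) (a^2) * ξ ^ (-1 - 2*α) :=
          mul_le_mul_of_nonneg_right hg hp.le
        rw [hM]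
        have h2 : (0:ℝ) ≤ (t/x^2) * (min (ξ^2) (b^2) * ξ ^ (-1 - 2*α)) := by positivity
        dsimp only
        linarith
      · have hg : 1 - f ξ ≤ (t/x^2) * min (ξ^2) (b^2) := by
          have hb2 : b^2 = x^2 / t := by
            rw [hb, div_pow, Real.sq_sqrt ht0]
          rcases le_total (ξ^2) (b^2) with hm | hm
          · rw [min_eq_left hm]
            have := hconvbd ξ h.le
            rw [div_mul_eq_mul_div, le_div_iff₀ (by positivity : (0:ℝ) < x^2)]
            nlinarith
          · rw [min_eq_right hm, hb2]
            have : (t/x^2) * (x^2/t) = 1 := by field_simp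
            rw [this]
            have := hnn ξ (mem_Ici.2 hξ0.le); linarith
        have : (1 - f ξ) * ξ ^ (-1 - 2*α) ≤ (t/x^2) * min (ξ^2) (b^2) * ξ ^ (-1 - 2*α) :=
          mul_le_mul_of_nonneg_right hg hp.le
        rw [hM]
        have h2 : (0:ℝ) ≤ min (ξ^2) (a^2) * ξ ^ (-1 - 2*α) := by positivity
        dsimp only
        rw [mul_assoc] at this
        linarith
    have hIle : (∫ ξ in Ioi (0:ℝ), (1 - f ξ) * ξ ^ (-1 - 2*α)) ≤ ∫ ξ in Ioi (0:ℝ), M ξ := by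
      apply integral_mono_of_nonneg
      · exact (ae_restrict_iff' measurableSet_Ioi).2 (ae_of_all _ fun ξ hξ => by
          have hξ0 : (0:ℝ) < ξ := hξ
          have := hg0 ξ hξ0.le
          positivity)
      · exact hIntM
      · exact (ae_restrict_iff' measurableSet_Ioi).2 (ae_of_all _ hpt)
    have hIM : ∫ ξ in Ioi (0:ℝ), M ξ
        = (t ^ (1-α) + t ^ α * x ^ (-(2*α))) / (2*α*(1-α)) := by
      rw [hM]
      rw [integral_add hKa.1 (hKb.1.const_mul _), MeasureTheory.integral_const_mul,
        hKa.2, hKb.2]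
      have hea : a ^ (2-2*α) = t ^ (1-α) := by
        rw [ha, Real.sqrt_eq_rpow, ← Real.rpow_mul ht0]
        congr 1; ring
      have heb : (t/x^2) * b ^ (2-2*α) = t ^ α * x ^ (-(2*α)) := by
        have hb1 : b ^ (2-2*α) = x ^ (2-2*α) / t ^ (1-α) := by
          rw [hb, Real.div_rpow hx.le (Real.sqrt_nonneg t), Real.sqrt_eq_rpow,
            ← Real.rpow_mul ht0, show (1:ℝ)/2*(2-2*α) = 1-α by ring]
        rw [hb1,
          show t / x^2 * (x ^ (2-2*α) / t ^ (1-α)) = (t / t ^ (1-α)) * (x ^ (2-2*α) / x^2) by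
            ring,
          show (x:ℝ)^2 = x ^ ((2:ℕ):ℝ) from (Real.rpow_natCast x 2).symm,
          ← Real.rpow_sub hx]
        nth_rewrite 1 [show t = t ^ (1:ℝ) from (Real.rpow_one t).symm]
        rw [← Real.rpow_sub htpos]
        push_cast
        rw [show (1:ℝ) - (1-α) = α by ring, show (2:ℝ)-2*α-2 = -(2*α) by ring]
      rw [hea, ← mul_div_assoc, heb]
      ring
    have hD : (0:ℝ) < 2*α*(1-α) := by nlinarith
    have hcoef : 0 ≤ 2*α*(1+2*α)/3 * C1 α :=
      mul_nonneg (by positivity) hC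
    have hcoef' : 0 ≤ (1+2*α)/(3*(1-α)) * C1 α :=
      mul_nonneg (div_nonneg (by linarith) (by linarith)) hC
    have step1 : (2*α*(1+2*α)/3) * C1 α * ∫ ξ in Ioi (0:ℝ), (1 - f ξ) * ξ ^ (-1 - 2*α)
        ≤ (2*α*(1+2*α)/3 * C1 α) * ((t ^ (1-α) + t ^ α * x ^ (-(2*α))) / (2*α*(1-α))) := by
      exact mul_le_mul_of_nonneg_left (hIle.trans_eq hIM) hcoef
    have step2 : (2*α*(1+2*α)/3 * C1 α) * ((t ^ (1-α) + t ^ α * x ^ (-(2*α))) / (2*α*(1-α)))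
        = ((1+2*α)/(3*(1-α)) * C1 α) * (t ^ (1-α) + t ^ α * x ^ (-(2*α))) := by
      have h1 : α ≠ 0 := ne_of_gt hα0
      have h2 : (1:ℝ) - α ≠ 0 := by intro h; linarith
      field_simp
    have step3 : t ^ (1-α) ≤ t ^ min (1-α) α :=
      Real.rpow_le_rpow_of_exponent_ge htpos ht1 (min_le_left _ _)
    have step4 : t ^ α ≤ t ^ min (1-α) α :=
      Real.rpow_le_rpow_of_exponent_ge htpos ht1 (min_le_right _ _)
    have hx2a : (0:ℝ) ≤ x ^ (-(2*α)) := Real.rpow_nonneg hx.le _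
    calc (2*α*(1+2*α)/3) * C1 α * ∫ ξ in Ioi (0:ℝ), (1 - f ξ) * ξ ^ (-1 - 2*α)
        ≤ ((1+2*α)/(3*(1-α)) * C1 α) * (t ^ (1-α) + t ^ α * x ^ (-(2*α))) :=
          step1.trans_eq step2
      _ ≤ ((1+2*α)/(3*(1-α)) * C1 α) * (t ^ min (1-α) α + t ^ min (1-α) α * x ^ (-(2*α))) :=
          mul_le_mul_of_nonneg_left
            (add_le_add step3 (mul_le_mul_of_nonneg_right step4 hx2a)) hcoef'
      _ = (1+2*α)/(3*(1-α)) * C1 α * t ^ min (1-α) α * (1 + x ^ (-(2*α))) := by ring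


/-- For every `α ∈ (0,1)`, every `f ∈ 𝒱₁` and every `x > 0`,
`c(f) ≤ ((1+2α)/(3(1-α))) c_{1,α} (1-f(x))^{min(1-α,α)} (1 + x^{-2α})`. -/
theorem cV_le (α : ℝ) (hα : α ∈ Ioo (0:ℝ) 1) (f : ℝ → ℝ) (hf : V1 α f)
    (x : ℝ) (hx : 0 < x) :
    cV α f ≤ (1 + 2*α) / (3*(1 - α)) * C1 α *
      (1 - f x) ^ min (1 - α) α * (1 + x ^ (-(2*α))) := by
  obtain ⟨-, -, -, hf0, hnn, hanti, hconv, hlb, -⟩ := hf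
  unfold cV
  exact cV_le' α hα f hf0 hnn hanti hconv hlb x hx

end GSQGplane
end
end

section
/- For every α ∈ (0,1) and all f₁, f₂ ∈ 𝒱₁, one has |c(f₁) − c(f₂)| ≤ ((1+2α)(3−2α)/(3(1−α)))·c_{1,α}·(sup_{x∈ℝ} ρ(x)|f₁(x)−f₂(x)|)^{1−α}. In particular, the functional c is Hölder continuous of exponent 1−α on 𝒱₁ with respect to the weighted norm ‖ρ·‖_{L∞}. -/
open Real MeasureTheory Set Filter BoundedContinuousFunction

noncomputable section

namespace GSQGplane

lemma C1_pos {α : ℝ} (hα : α ∈ Ioo (0:ℝ) 1) : 0 < C1 α := by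
  have h1 : 0 < Real.Gamma (1/2 + α) := Real.Gamma_pos_of_pos (by linarith [hα.1])
  have h2 : 0 < Real.Gamma (1 - α) := Real.Gamma_pos_of_pos (by linarith [hα.2])
  have h3 : 0 < Real.sqrt π := Real.sqrt_pos.mpr Real.pi_pos
  have h4 : (0:ℝ) < (2:ℝ) ^ (2*α - 1) := Real.rpow_pos_of_pos two_pos _
  exact div_pos (mul_pos h4 h1) (mul_pos h3 h2)

lemma V1_bounds {α : ℝ} {f : ℝ → ℝ} (h : V1 α f) {x : ℝ} (hx : 0 ≤ x) :
    0 ≤ f x ∧ f x ≤ 1 ∧ 1 - x^2 ≤ f x := by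
  obtain ⟨-, -, -, h0, hpos, hanti, -, hlow, -⟩ := h
  refine ⟨hpos x hx, ?_, (le_max_right 0 (1 - x^2)).trans (hlow x)⟩
  have := hanti (mem_Ici.mpr le_rfl) (mem_Ici.mpr hx) hx
  rwa [h0] at this

lemma one_add_rpow_le {x p : ℝ} (hx : 0 ≤ x) (h0 : 0 ≤ p) (h1 : p ≤ 1) :
    (1 + x) ^ p ≤ 1 + x ^ p := by
  have h := NNReal.rpow_add_le_add_rpow (1 : NNReal) x.toNNReal h0 h1
  rw [NNReal.one_rpow] at h
  have h2 := NNReal.coe_le_coe.mpr h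
  rw [NNReal.coe_rpow, NNReal.coe_add, NNReal.coe_add, NNReal.coe_rpow, NNReal.coe_one,
    Real.coe_toNNReal x hx] at h2
  exact h2

lemma integrable_aux {α : ℝ} (hα : α ∈ Ioo (0:ℝ) 1) {f : ℝ → ℝ} (h : V1 α f) :
    IntegrableOn (fun ξ : ℝ => (1 - f ξ) * ξ ^ (-1 - 2*α)) (Ioi (0:ℝ)) := by
  have hc : Continuous f := h.1
  have hco : ContinuousOn (fun ξ : ℝ => (1 - f ξ) * ξ ^ (-1 - 2*α)) (Ioi (0:ℝ)) := by
    refine (continuousOn_const.sub hc.continuousOn).mul ?_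
    intro x hx
    exact (Real.continuousAt_rpow_const x _ (Or.inl (ne_of_gt hx))).continuousWithinAt
  rw [← Ioc_union_Ioi_eq_Ioi (zero_le_one : (0:ℝ) ≤ 1)]
  refine IntegrableOn.union ?_ ?_
  · have hmaj : IntegrableOn (fun ξ : ℝ => ξ ^ (1 - 2*α)) (Ioc (0:ℝ) 1) := by
      have := intervalIntegral.intervalIntegrable_rpow' (a := (0:ℝ)) (b := 1)
        (by linarith [hα.2] : (-1:ℝ) < 1 - 2*α)
      rwa [intervalIntegrable_iff_integrableOn_Ioc_of_le zero_le_one] at this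
    refine hmaj.mono' ((hco.mono Ioc_subset_Ioi_self).aestronglyMeasurable measurableSet_Ioc) ?_
    refine (ae_restrict_iff' measurableSet_Ioc).mpr (ae_of_all _ fun ξ hξ => ?_)
    obtain ⟨hf0, hf1, hfl⟩ := V1_bounds h hξ.1.le
    have hr0 : (0:ℝ) ≤ ξ ^ (-1 - 2*α) := Real.rpow_nonneg hξ.1.le _
    rw [Real.norm_eq_abs, abs_mul, abs_of_nonneg (by linarith : (0:ℝ) ≤ 1 - f ξ),
      abs_of_nonneg hr0]
    calc (1 - f ξ) * ξ ^ (-1 - 2*α) ≤ ξ^2 * ξ ^ (-1 - 2*α) := by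
          apply mul_le_mul_of_nonneg_right (by linarith) hr0
      _ = ξ ^ (1 - 2*α) := by
          rw [← Real.rpow_natCast ξ 2, ← Real.rpow_add hξ.1]
          congr 1
          push_cast
          ring
  · have hmaj : IntegrableOn (fun ξ : ℝ => ξ ^ (-1 - 2*α)) (Ioi (1:ℝ)) :=
      integrableOn_Ioi_rpow_of_lt (by linarith [hα.1] : (-1 - 2*α) < -1) one_pos
    refine hmaj.mono' ((hco.mono (Ioi_subset_Ioi zero_le_one)).aestronglyMeasurable
      measurableSet_Ioi) ?_
    refine (ae_restrict_iff' measurableSet_Ioi).mpr (ae_of_all _ fun ξ hξ => ?_)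
    have hξ0 : (0:ℝ) < ξ := lt_trans one_pos hξ
    obtain ⟨hf0, hf1, -⟩ := V1_bounds h hξ0.le
    have hr0 : (0:ℝ) ≤ ξ ^ (-1 - 2*α) := Real.rpow_nonneg hξ0.le _
    rw [Real.norm_eq_abs, abs_mul, abs_of_nonneg (by linarith : (0:ℝ) ≤ 1 - f ξ),
      abs_of_nonneg hr0]
    nlinarith



/-- The functional `c` is Hölder continuous of exponent `1-α` on `𝒱₁`
with respect to the weighted norm `‖ρ·‖_{L^∞}`:
`|c(f₁) - c(f₂)| ≤ ((1+2α)(3-2α)/(3(1-α))) c_{1,α} ‖ρ(f₁-f₂)‖_{L^∞}^{1-α}`. -/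
theorem cV_holder (α : ℝ) (hα : α ∈ Ioo (0:ℝ) 1) (f₁ f₂ : ℝ → ℝ)
    (h₁ : V1 α f₁) (h₂ : V1 α f₂) :
    |cV α f₁ - cV α f₂| ≤
      (1 + 2*α) * (3 - 2*α) / (3*(1 - α)) * C1 α *
        (⨆ x : ℝ, rho α x * |f₁ x - f₂ x|) ^ (1 - α) := by
  obtain ⟨hα0, hα1⟩ := hα
  have hCpos := C1_pos ⟨hα0, hα1⟩
  set M : ℝ := ⨆ x : ℝ, rho α x * |f₁ x - f₂ x| with hMdef
  have heven : ∀ x : ℝ, |f₁ x - f₂ x| ≤ 1 := by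
    intro x
    have e₁ : f₁ |x| = f₁ x := by
      rcases abs_choice x with h | h
      · rw [h]
      · rw [h, h₁.2.1]
    have e₂ : f₂ |x| = f₂ x := by
      rcases abs_choice x with h | h
      · rw [h]
      · rw [h, h₂.2.1]
    obtain ⟨a0, a1, -⟩ := V1_bounds h₁ (abs_nonneg x)
    obtain ⟨b0, b1, -⟩ := V1_bounds h₂ (abs_nonneg x)
    rw [← e₁, ← e₂, abs_le]
    constructor <;> linarith
  have hterm : ∀ x : ℝ, rho α x * |f₁ x - f₂ x| ≤ 1 := by
    intro x
    have hρ1 : rho α x ≤ 1 := by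
      apply Real.rpow_le_one_of_one_le_of_nonpos
        (le_add_of_nonneg_right (abs_nonneg x)) (by linarith)
    exact mul_le_one₀ hρ1 (abs_nonneg _) (heven x)
  have hbdd : BddAbove (Set.range fun x : ℝ => rho α x * |f₁ x - f₂ x|) := by
    refine ⟨1, ?_⟩
    rintro _ ⟨x, rfl⟩
    exact hterm x
  have hρ0 : ∀ x : ℝ, 0 ≤ rho α x := fun x => Real.rpow_nonneg (by positivity) _
  have hMle : ∀ x : ℝ, rho α x * |f₁ x - f₂ x| ≤ M := fun x => le_ciSup hbdd x
  have hM1 : M ≤ 1 := ciSup_le hterm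
  have hM0 : 0 ≤ M := le_trans (mul_nonneg (hρ0 0) (abs_nonneg _)) (hMle 0)
  rcases hM0.eq_or_lt with hM | hM
  · -- degenerate case M = 0
    have hfe : f₁ = f₂ := by
      funext x
      have h1 := hMle x
      rw [← hM] at h1
      have hρ : 0 < rho α x := Real.rpow_pos_of_pos (by positivity) _
      have h2 : rho α x * |f₁ x - f₂ x| = 0 :=
        le_antisymm h1 (mul_nonneg (hρ0 x) (abs_nonneg _))
      rcases mul_eq_zero.mp h2 with h3 | h3
      · exact absurd h3 hρ.ne'
      · have h4 := abs_eq_zero.mp h3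
        linarith
    rw [hfe, sub_self, abs_zero, ← hM,
      Real.zero_rpow (by intro hc; linarith [hc] : (1:ℝ) - α ≠ 0), mul_zero]
  · -- main case M > 0
    set δ : ℝ := M ^ ((1:ℝ)/2) with hδdef
    have hδ0 : 0 < δ := Real.rpow_pos_of_pos hM _
    have hδ1 : δ ≤ 1 := Real.rpow_le_one hM0 hM1 (by norm_num)
    have hi₁ := integrable_aux ⟨hα0, hα1⟩ h₁
    have hi₂ := integrable_aux ⟨hα0, hα1⟩ h₂
    have hint : IntegrableOn (fun ξ : ℝ => (f₂ ξ - f₁ ξ) * ξ ^ (-1 - 2*α)) (Ioi (0:ℝ)) := by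
      exact IntegrableOn.congr_fun (hi₁.sub hi₂) (fun ξ _ => by simp only [Pi.sub_apply]; ring) measurableSet_Ioi
    have key : cV α f₁ - cV α f₂
        = (2*α*(1+2*α)/3) * C1 α *
          ∫ ξ in Ioi (0:ℝ), (f₂ ξ - f₁ ξ) * ξ ^ (-1 - 2*α) := by
      unfold cV
      rw [← mul_sub, ← integral_sub hi₁ hi₂]
      congr 1
      exact integral_congr_ae (ae_of_all _ fun ξ => by ring)
    have habs : |∫ ξ in Ioi (0:ℝ), (f₂ ξ - f₁ ξ) * ξ ^ (-1 - 2*α)|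
        ≤ ∫ ξ in Ioi (0:ℝ), |(f₂ ξ - f₁ ξ) * ξ ^ (-1 - 2*α)| := by
      simpa [Real.norm_eq_abs, abs_mul] using
        norm_integral_le_integral_norm (μ := volume.restrict (Ioi (0:ℝ)))
          (fun ξ : ℝ => (f₂ ξ - f₁ ξ) * ξ ^ (-1 - 2*α))
    have habs_int : IntegrableOn (fun ξ : ℝ => |(f₂ ξ - f₁ ξ) * ξ ^ (-1 - 2*α)|)
        (Ioi (0:ℝ)) := hint.abs
    have hsplit : (∫ ξ in Ioi (0:ℝ), |(f₂ ξ - f₁ ξ) * ξ ^ (-1 - 2*α)|)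
        = (∫ ξ in Ioc (0:ℝ) δ, |(f₂ ξ - f₁ ξ) * ξ ^ (-1 - 2*α)|)
          + ∫ ξ in Ioi δ, |(f₂ ξ - f₁ ξ) * ξ ^ (-1 - 2*α)| := by
      rw [← Ioc_union_Ioi_eq_Ioi hδ0.le,
        setIntegral_union (Ioc_disjoint_Ioi le_rfl) measurableSet_Ioi
          (habs_int.mono_set Ioc_subset_Ioi_self)
          (habs_int.mono_set (Ioi_subset_Ioi hδ0.le))]
    have hmaj1 : IntegrableOn (fun ξ : ℝ => ξ ^ (1 - 2*α)) (Ioc (0:ℝ) δ) := by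
      have := intervalIntegral.intervalIntegrable_rpow' (a := (0:ℝ)) (b := δ)
        (by linarith : (-1:ℝ) < 1 - 2*α)
      rwa [intervalIntegrable_iff_integrableOn_Ioc_of_le hδ0.le] at this
    have hp1 : (∫ ξ in Ioc (0:ℝ) δ, |(f₂ ξ - f₁ ξ) * ξ ^ (-1 - 2*α)|)
        ≤ ∫ ξ in Ioc (0:ℝ) δ, ξ ^ (1 - 2*α) := by
      refine setIntegral_mono_on (habs_int.mono_set Ioc_subset_Ioi_self) hmaj1
        measurableSet_Ioc ?_
      intro ξ hξ
      obtain ⟨ha0, ha1, hal⟩ := V1_bounds h₁ hξ.1.le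
      obtain ⟨hb0, hb1, hbl⟩ := V1_bounds h₂ hξ.1.le
      have hr0 : (0:ℝ) ≤ ξ ^ (-1 - 2*α) := Real.rpow_nonneg hξ.1.le _
      rw [abs_mul, abs_of_nonneg hr0]
      calc |f₂ ξ - f₁ ξ| * ξ ^ (-1 - 2*α) ≤ ξ^2 * ξ ^ (-1 - 2*α) := by
            refine mul_le_mul_of_nonneg_right ?_ hr0
            rw [abs_le]
            constructor <;> linarith
        _ = ξ ^ (1 - 2*α) := by
            rw [← Real.rpow_natCast ξ 2, ← Real.rpow_add hξ.1]
            congr 1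
            push_cast
            ring
    have I1 : (∫ ξ in Ioc (0:ℝ) δ, ξ ^ (1 - 2*α)) = δ ^ (2 - 2*α) / (2 - 2*α) := by
      rw [← intervalIntegral.integral_of_le hδ0.le,
        integral_rpow (Or.inl (by linarith : (-1:ℝ) < 1 - 2*α)),
        Real.zero_rpow (by intro hc; linarith [hc] : (1 - 2*α + 1) ≠ 0),
        show 1 - 2*α + 1 = 2 - 2*α by ring]
      ring
    have hm12 : (-1 - 2*α) < -1 := by linarith
    have hm1a : (-1 - α) < -1 := by linarith
    have hmaj2 : IntegrableOn (fun ξ : ℝ => M * (ξ ^ (-1 - 2*α) + ξ ^ (-1 - α))) (Ioi δ) :=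
      ((integrableOn_Ioi_rpow_of_lt hm12 hδ0).add
        (integrableOn_Ioi_rpow_of_lt hm1a hδ0)).const_mul M
    have hp2 : (∫ ξ in Ioi δ, |(f₂ ξ - f₁ ξ) * ξ ^ (-1 - 2*α)|)
        ≤ ∫ ξ in Ioi δ, M * (ξ ^ (-1 - 2*α) + ξ ^ (-1 - α)) := by
      refine setIntegral_mono_on (habs_int.mono_set (Ioi_subset_Ioi hδ0.le)) hmaj2
        measurableSet_Ioi ?_
      intro ξ hξ
      have hξ0 : (0:ℝ) < ξ := lt_trans hδ0 hξ
      have h1ξ : (0:ℝ) < 1 + ξ := by linarith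
      have hr0 : (0:ℝ) ≤ ξ ^ (-1 - 2*α) := Real.rpow_nonneg hξ0.le _
      have hpowmul : ξ ^ α * ξ ^ (-1 - 2*α) = ξ ^ (-1 - α) := by
        rw [← Real.rpow_add hξ0]
        congr 1
        ring
      have hΔ : |f₂ ξ - f₁ ξ| ≤ M * (1 + ξ ^ α) := by
        have hle := hMle ξ
        have hρ : rho α ξ = (1 + ξ) ^ (-α) := by
          unfold rho
          rw [abs_of_pos hξ0]
        rw [hρ] at hle
        have hpow : (1 + ξ) ^ α * (1 + ξ) ^ (-α) = 1 := by
          rw [← Real.rpow_add h1ξ]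
          simp
        have h2 : |f₁ ξ - f₂ ξ| ≤ (1 + ξ) ^ α * M := by
          calc |f₁ ξ - f₂ ξ| = (1 + ξ) ^ α * ((1 + ξ) ^ (-α) * |f₁ ξ - f₂ ξ|) := by
                rw [← mul_assoc, hpow, one_mul]
            _ ≤ (1 + ξ) ^ α * M :=
                mul_le_mul_of_nonneg_left hle (Real.rpow_nonneg h1ξ.le _)
        rw [abs_sub_comm]
        calc |f₁ ξ - f₂ ξ| ≤ (1 + ξ) ^ α * M := h2
          _ ≤ (1 + ξ ^ α) * M :=
              mul_le_mul_of_nonneg_right (one_add_rpow_le hξ0.le hα0.le hα1.le) hM0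
          _ = M * (1 + ξ ^ α) := by ring
      rw [abs_mul, abs_of_nonneg hr0]
      calc |f₂ ξ - f₁ ξ| * ξ ^ (-1 - 2*α) ≤ (M * (1 + ξ ^ α)) * ξ ^ (-1 - 2*α) :=
            mul_le_mul_of_nonneg_right hΔ hr0
        _ = M * (ξ ^ (-1 - 2*α) + ξ ^ α * ξ ^ (-1 - 2*α)) := by ring
        _ = M * (ξ ^ (-1 - 2*α) + ξ ^ (-1 - α)) := by rw [hpowmul]
    have I2 : (∫ ξ in Ioi δ, M * (ξ ^ (-1 - 2*α) + ξ ^ (-1 - α)))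
        = M * (δ ^ (-(2*α)) / (2*α) + δ ^ (-α) / α) := by
      rw [MeasureTheory.integral_const_mul,
        integral_add (integrableOn_Ioi_rpow_of_lt hm12 hδ0)
          (integrableOn_Ioi_rpow_of_lt hm1a hδ0),
        integral_Ioi_rpow_of_lt hm12 hδ0, integral_Ioi_rpow_of_lt hm1a hδ0,
        show (-1 - 2*α + 1) = -(2*α) by ring, show (-1 - α + 1) = -α by ring]
      rw [neg_div_neg_eq]
      congr 2
      rw [neg_div, div_neg, neg_neg]
    have p1 : δ ^ (2 - 2*α) = M ^ (1 - α) := by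
      rw [hδdef, ← Real.rpow_mul hM0]
      congr 1
      ring
    have p2 : δ ^ (-(2*α)) = M ^ (-α) := by
      rw [hδdef, ← Real.rpow_mul hM0]
      congr 1
      ring
    have p3 : δ ^ (-α) = M ^ (-(α/2)) := by
      rw [hδdef, ← Real.rpow_mul hM0]
      congr 1
      ring
    have m1 : M * M ^ (-α) = M ^ (1 - α) := by
      rw [show (1 - α) = 1 + (-α) by ring, Real.rpow_add hM, Real.rpow_one]
    have m2 : M * M ^ (-(α/2)) = M ^ (1 - α/2) := by
      rw [show (1 - α/2) = 1 + (-(α/2)) by ring, Real.rpow_add hM, Real.rpow_one]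
    have q : M ^ (1 - α/2) ≤ M ^ (1 - α) :=
      Real.rpow_le_rpow_of_exponent_ge hM hM1 (by linarith)
    have hK0 : 0 ≤ (2*α*(1+2*α)/3) * C1 α := by positivity
    have hItot : |∫ ξ in Ioi (0:ℝ), (f₂ ξ - f₁ ξ) * ξ ^ (-1 - 2*α)|
        ≤ M ^ (1 - α) / (2 - 2*α) + (M ^ (1 - α) / (2*α) + M ^ (1 - α) / α) := by
      refine habs.trans ?_
      rw [hsplit]
      have e1 := hp1.trans_eq I1
      have e2 := hp2.trans_eq I2
      have e3 : δ ^ (2 - 2*α) / (2 - 2*α) + M * (δ ^ (-(2*α)) / (2*α) + δ ^ (-α) / α)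
          ≤ M ^ (1 - α) / (2 - 2*α) + (M ^ (1 - α) / (2*α) + M ^ (1 - α) / α) := by
        rw [p1, p2, p3, mul_add, ← mul_div_assoc, ← mul_div_assoc, m1, m2]
        gcongr
      linarith
    rw [key, abs_mul, abs_of_nonneg hK0]
    calc (2*α*(1+2*α)/3) * C1 α * |∫ ξ in Ioi (0:ℝ), (f₂ ξ - f₁ ξ) * ξ ^ (-1 - 2*α)|
        ≤ (2*α*(1+2*α)/3) * C1 α *
          (M ^ (1 - α) / (2 - 2*α) + (M ^ (1 - α) / (2*α) + M ^ (1 - α) / α)) :=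
          mul_le_mul_of_nonneg_left hItot hK0
      _ = (1 + 2*α) * (3 - 2*α) / (3*(1 - α)) * C1 α * M ^ (1 - α) := by
          have hα0' : α ≠ 0 := hα0.ne'
          have h1α : (1:ℝ) - α ≠ 0 := by
            intro hc
            linarith [hc]
          have h2α : (2:ℝ) - 2*α ≠ 0 := by
            intro hc
            linarith [hc]
          field_simp
          ring


end GSQGplane
end
end

section
/- For every α ∈ (0,1), the set 𝒱₁ is compact with respect to the weighted uniform metric d(f,g) = sup_{x∈ℝ} ρ(x)|f(x)−g(x)|; in particular, every sequence in 𝒱₁ admits a subsequence that converges in this metric to an element of 𝒱₁. -/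
/-!
Every `f ∈ 𝒱₁` takes values in `[0, 1]`, and convexity of `f ∘ √` together with `f x ≥ 1 - x²`
gives `|f x - f y| ≤ |x² - y²|`, so `𝒱₁` is equicontinuous. The defining conditions of `𝒱₁`
survive pointwise limits; for the one on the left derivative at `1/2` this is because, `f ∘ √`
being convex, it is equivalent to a bound on the slopes of the chords of `f ∘ √` ending at `1/4`.
Hence `𝒱₁` is compact for pointwise convergence (Tychonoff). On an equicontinuous family pointwise
convergence is uniform on compact sets, and since the functions are bounded and `ρ` vanishes at
infinity, it is even uniform after multiplication by `ρ`. So `f ↦ ρ f` is a continuous map from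
this compact space to the bounded continuous functions, and its image is compact.
-/

open Real MeasureTheory Set Filter BoundedContinuousFunction

noncomputable section

namespace GSQGplane

open Topology

section General

variable {X ι : Type*} [TopologicalSpace X] {ℱ : Filter ι} {F : ι → X → ℝ} {f : X → ℝ}

theorem EquicontinuousOn.tendstoUniformlyOn_of_tendsto {K : Set X} (hK : IsCompact K)
    (hF : EquicontinuousOn F K) (h : ∀ x ∈ K, Tendsto (F · x) ℱ (𝓝 (f x))) :
    TendstoUniformlyOn F f ℱ K := by
  have := (EquicontinuousOn.tendsto_uniformOnFun_iff_pi' (𝔖 := {K}) (by simpa using hK)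
    (by simpa using hF) ℱ f).2 (tendsto_pi_nhds.2 fun x => h x (by simpa using x.2))
  rw [UniformOnFun.tendsto_iff_tendstoUniformlyOn] at this
  exact this K rfl

theorem Equicontinuous.tendstoUniformly_mul_of_tendsto {w : X → ℝ} {M : ℝ}
    (hF : Equicontinuous F) (hw : Continuous w) (hw0 : Tendsto w (cocompact X) (𝓝 0))
    (hM : ∀ i x, |F i x - f x| ≤ M) (h : ∀ x, Tendsto (F · x) ℱ (𝓝 (f x))) :
    TendstoUniformly (fun i x => w x * F i x) (fun x => w x * f x) ℱ := by
  rw [Metric.tendstoUniformly_iff]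
  intro ε hε
  obtain ⟨K, hK, hw_small⟩ := hasBasis_cocompact.eventually_iff.1
    (hw0.eventually (Metric.ball_mem_nhds 0 (div_pos hε (by positivity : 0 < |M| + 1))))
  obtain ⟨C, hC⟩ := hK.exists_bound_of_continuousOn hw.continuousOn
  filter_upwards [Metric.tendstoUniformlyOn_iff.1
    (EquicontinuousOn.tendstoUniformlyOn_of_tendsto hK (hF.equicontinuousOn K) fun x _ => h x)
    (ε / (|C| + 1)) (by positivity)] with i hi x
  rw [Real.dist_eq, ← mul_sub, abs_mul, abs_sub_comm]
  by_cases hx : x ∈ K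
  · have hwx : |w x| ≤ |C| := (hC x hx).trans (le_abs_self C)
    have hdx : |F i x - f x| < ε / (|C| + 1) := by
      simpa [Real.dist_eq, abs_sub_comm] using hi x hx
    calc |w x| * |F i x - f x| ≤ |C| * (ε / (|C| + 1)) :=
          mul_le_mul hwx hdx.le (abs_nonneg _) (abs_nonneg C)
      _ < ε := by rw [mul_div_assoc', div_lt_iff₀ (by positivity)]; nlinarith
  · have hwx : |w x| < ε / (|M| + 1) := by simpa using hw_small hx
    calc |w x| * |F i x - f x| ≤ ε / (|M| + 1) * |M| :=
          mul_le_mul hwx.le ((hM i x).trans (le_abs_self M)) (abs_nonneg _) (by positivity)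
      _ < ε := by rw [div_mul_eq_mul_div, div_lt_iff₀ (by positivity)]; nlinarith

end General

theorem equicontinuous_of_abs_sub_le_abs_sq_sub {ι : Type*} {F : ι → ℝ → ℝ}
    (hF : ∀ i x y, |F i x - F i y| ≤ |x ^ 2 - y ^ 2|) : Equicontinuous F := fun x₀ =>
  Metric.equicontinuousAt_of_continuity_modulus (fun x => |x₀ ^ 2 - x ^ 2|)
    (by simpa using ((continuous_const.sub (continuous_pow 2)).abs.tendsto x₀ :
      Tendsto (fun x : ℝ => |x₀ ^ 2 - x ^ 2|) _ _)) F
    (Eventually.of_forall fun x i => (hF i x₀ x).trans_eq' (Real.dist_eq _ _))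

theorem hasDerivWithinAt_Iio_comp_sq {h : ℝ → ℝ} {D y : ℝ} (hy : 0 < y)
    (hD : HasDerivWithinAt h D (Iio (y ^ 2)) (y ^ 2)) :
    HasDerivWithinAt (fun x => h (x ^ 2)) (D * (2 * y)) (Iio y) y := by
  have hsq : HasDerivWithinAt (fun x : ℝ => x ^ 2) (2 * y) (Ioo 0 y) y := by
    simpa using (hasDerivAt_pow 2 y).hasDerivWithinAt
  have hmaps : MapsTo (fun x : ℝ => x ^ 2) (Ioo 0 y) (Iio (y ^ 2)) := fun x hx =>
    pow_lt_pow_left₀ hx.2 hx.1.le two_ne_zero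
  exact (hD.comp (h := fun x : ℝ => x ^ 2) y hsq hmaps).mono_of_mem_nhdsWithin
    (Ioo_mem_nhdsLT hy)

theorem ConvexOn.exists_hasDerivWithinAt_Iio_comp_sq_le_iff {f h : ℝ → ℝ}
    (hh : ConvexOn ℝ (Ici 0) h) (hfh : ∀ x, f x = h (x ^ 2)) {y c : ℝ} (hy : 0 < y) :
    (∃ d, HasDerivWithinAt f d (Iio y) y ∧ d ≤ c) ↔
      ∀ t ∈ Ico 0 (y ^ 2), slope h t (y ^ 2) ≤ c / (2 * y) := by
  obtain rfl : f = fun x => h (x ^ 2) := funext hfh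
  have hy2 : y ^ 2 ∈ interior (Ici 0) := by rw [interior_Ici]; exact pow_pos hy 2
  set D := sSup (slope h (y ^ 2) '' {t ∈ Ici 0 | t < y ^ 2})
  have hD : HasDerivWithinAt h D (Iio (y ^ 2)) (y ^ 2) :=
    hh.hasDerivWithinAt_sSup_slope_of_mem_interior hy2
  have hcomp := hasDerivWithinAt_Iio_comp_sq hy hD
  constructor
  · rintro ⟨d, hd, hdc⟩ t ht
    obtain rfl : d = D * (2 * y) := (uniqueDiffWithinAt_Iio y).eq_deriv _ hd hcomp
    calc slope h t (y ^ 2) ≤ D :=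
          hh.slope_le_of_hasDerivWithinAt_Iio ht.1 (interior_subset hy2) ht.2 hD
      _ = D * (2 * y) / (2 * y) := by field_simp
      _ ≤ c / (2 * y) := by gcongr
  · intro hslope
    refine ⟨_, hcomp, ?_⟩
    have hDc : D ≤ c / (2 * y) := by
      refine csSup_le ⟨_, 0, ⟨self_mem_Ici, pow_pos hy 2⟩, rfl⟩ ?_
      rintro _ ⟨t, ht, rfl⟩
      rw [slope_comm]
      exact hslope t ht
    calc D * (2 * y) ≤ c / (2 * y) * (2 * y) := by gcongr
      _ = c := by field_simp

-- The chord of `h` over `[0, s]` has slope at least `-1`, and chords further right are steeper.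
theorem ConvexOn.sub_le_of_forall_sub_le {h : ℝ → ℝ} (hh : ConvexOn ℝ (Ici 0) h)
    (hlb : ∀ r, 0 ≤ r → h 0 - r ≤ h r) {s t : ℝ} (hs : 0 ≤ s) (hst : s ≤ t) :
    h s - h t ≤ t - s := by
  rcases hs.eq_or_lt with rfl | hs
  · linarith [hlb t hst]
  rcases hst.eq_or_lt with rfl | hst
  · simp
  have hfirst : -1 ≤ (h s - h 0) / (s - 0) := by
    rw [sub_zero, le_div_iff₀ hs]; linarith [hlb s hs.le]
  have := hfirst.trans (hh.slope_mono_adjacent self_mem_Ici (hs.trans hst).le hs hst)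
  rw [le_div_iff₀ (sub_pos.2 hst)] at this
  linarith

theorem rho_pos (α x : ℝ) : 0 < rho α x := Real.rpow_pos_of_pos (by positivity) _

theorem rho_le_one {α : ℝ} (hα : 0 ≤ α) (x : ℝ) : rho α x ≤ 1 :=
  Real.rpow_le_one_of_one_le_of_nonpos (by simp) (neg_nonpos.2 hα)

theorem continuous_rho (α : ℝ) : Continuous (rho α) :=
  (continuous_const.add continuous_abs).rpow_const fun x =>
    Or.inl (by positivity : (0 : ℝ) < 1 + |x|).ne'

theorem tendsto_rho_cocompact {α : ℝ} (hα : 0 < α) : Tendsto (rho α) (cocompact ℝ) (𝓝 0) :=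
  (tendsto_rpow_neg_atTop hα).comp
    (tendsto_atTop_add_const_left _ 1 tendsto_norm_cocompact_atTop)

section V1

variable {α : ℝ} {f : ℝ → ℝ}

theorem apply_sqrt_sq_of_even (heven : ∀ x, f (-x) = f x) (x : ℝ) : f √(x ^ 2) = f x := by
  rw [Real.sqrt_sq_eq_abs]
  rcases abs_choice x with h | h <;> rw [h]
  exact heven x

theorem V1.mem_Icc (hf : V1 α f) (x : ℝ) : f x ∈ Icc 0 1 := by
  obtain ⟨-, heven, -, h0, hnonneg, hanti, -⟩ := hf
  rw [← apply_sqrt_sq_of_even heven, ← h0]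
  exact ⟨hnonneg _ (sqrt_nonneg _), hanti self_mem_Ici (sqrt_nonneg _) (sqrt_nonneg _)⟩

theorem V1.sub_le (hf : V1 α f) (x y : ℝ) : f x - f y ≤ |x ^ 2 - y ^ 2| := by
  obtain ⟨-, heven, -, h0, -, hanti, hconv, hlb, -⟩ := hf
  rw [← apply_sqrt_sq_of_even heven x, ← apply_sqrt_sq_of_even heven y]
  rcases le_total (y ^ 2) (x ^ 2) with hyx | hxy
  · calc f √(x ^ 2) - f √(y ^ 2) ≤ 0 :=
          sub_nonpos.2 (hanti (sqrt_nonneg _) (sqrt_nonneg _) (Real.sqrt_le_sqrt hyx))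
      _ ≤ _ := abs_nonneg _
  rw [abs_sub_comm, abs_of_nonneg (sub_nonneg.2 hxy)]
  refine ConvexOn.sub_le_of_forall_sub_le hconv (fun r hr => ?_) (sq_nonneg x) hxy
  simpa [h0, Real.sq_sqrt hr] using (le_max_right _ _).trans (hlb √r)

theorem V1.abs_sub_le (hf : V1 α f) (x y : ℝ) : |f x - f y| ≤ |x ^ 2 - y ^ 2| :=
  abs_sub_le_iff.2 ⟨hf.sub_le x y, abs_sub_comm (x ^ 2) (y ^ 2) ▸ hf.sub_le y x⟩

theorem exists_hasDerivWithinAt_half_le_iff (heven : ∀ x, f (-x) = f x)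
    (hconv : ConvexOn ℝ (Ici 0) (fun s => f √s)) {c : ℝ} :
    (∃ d, HasDerivWithinAt f d (Iio (1 / 2)) (1 / 2) ∧ d ≤ c) ↔
      ∀ t ∈ Ico 0 (1 / 4), slope (fun s => f √s) t (1 / 4) ≤ c := by
  rw [ConvexOn.exists_hasDerivWithinAt_Iio_comp_sq_le_iff hconv
    (apply_sqrt_sq_of_even heven · |>.symm) one_half_pos]
  norm_num

theorem V1.of_tendsto {ι : Type*} {l : Filter ι} [l.NeBot] {u : ι → ℝ → ℝ} {g : ℝ → ℝ}
    (hα : 0 ≤ α) (hu : ∀ᶠ i in l, V1 α (u i)) (hg : ∀ x, Tendsto (u · x) l (𝓝 (g x))) :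
    V1 α g := by
  have lim_le {a b : ι → ℝ} {A B : ℝ} (ha : Tendsto a l (𝓝 A)) (hb : Tendsto b l (𝓝 B))
      (hab : ∀ i, V1 α (u i) → a i ≤ b i) : A ≤ B :=
    le_of_tendsto_of_tendsto ha hb (hu.mono hab)
  have heven : ∀ x, g (-x) = g x := fun x =>
    le_antisymm (lim_le (hg _) (hg _) fun i ⟨_, hev, _⟩ => (hev x).le)
      (lim_le (hg _) (hg _) fun i ⟨_, hev, _⟩ => (hev x).ge)
  have hIcc : ∀ x, g x ∈ Icc 0 1 := fun x =>
    isClosed_Icc.mem_of_tendsto (hg x) (hu.mono fun i hi => hi.mem_Icc x)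
  have hconv : ConvexOn ℝ (Ici 0) (fun s => g √s) :=
    ⟨convex_Ici 0, fun x hx y hy a b ha hb hab =>
      lim_le (hg _) (((hg _).const_mul a).add ((hg _).const_mul b))
        fun i ⟨_, _, _, _, _, _, hconv, _⟩ => hconv.2 hx hy ha hb hab⟩
  refine ⟨?_, heven, ⟨1, fun x => ?_⟩, ?_, fun x _ => (hIcc x).1,
    fun x hx y hy hxy => lim_le (hg y) (hg x) fun i ⟨_, _, _, _, _, hanti, _⟩ => hanti hx hy hxy,
    hconv, fun x => lim_le tendsto_const_nhds (hg x) fun i ⟨_, _, _, _, _, _, _, hlb, _⟩ => hlb x,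
    ?_⟩
  · exact (equicontinuous_of_abs_sub_le_abs_sq_sub (F := fun _ : Unit => g) fun _ x y =>
      lim_le ((hg x).sub (hg y)).abs tendsto_const_nhds fun i hi => hi.abs_sub_le x y).continuous ()
  · rw [abs_of_nonneg (hIcc x).1]
    exact mul_le_one₀ (rho_le_one hα x) (hIcc x).1 (hIcc x).2
  · exact tendsto_nhds_unique (hg 0)
      (tendsto_const_nhds.congr' (hu.mono fun i ⟨_, _, _, h0, _⟩ => h0.symm))
  · refine (exists_hasDerivWithinAt_half_le_iff heven hconv).2 fun t ht => ?_
    rw [slope_def_field]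
    refine le_of_tendsto (((hg _).sub (hg _)).div_const _) (hu.mono fun i hi => ?_)
    obtain ⟨_, hev, _, _, _, _, hconv, _, hderiv⟩ := hi
    simpa only [slope_def_field] using
      (exists_hasDerivWithinAt_half_le_iff hev hconv).1 hderiv t ht

theorem isClosed_setOf_V1 (hα : 0 ≤ α) : IsClosed {f : ℝ → ℝ | V1 α f} :=
  isClosed_of_closure_subset fun g hg =>
    have : (𝓝[{f | V1 α f}] g).NeBot := mem_closure_iff_nhdsWithin_neBot.1 hg
    V1.of_tendsto (l := 𝓝[{f | V1 α f}] g) (u := id) hα self_mem_nhdsWithin fun x =>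
      ((continuous_apply x).tendsto g).mono_left nhdsWithin_le_nhds

theorem isCompact_setOf_V1 (hα : 0 ≤ α) : IsCompact {f : ℝ → ℝ | V1 α f} :=
  (isCompact_univ_pi fun _ => isCompact_Icc).of_isClosed_subset (isClosed_setOf_V1 hα)
    fun _ hf x _ => hf.mem_Icc x

def weightedBCF (hα : 0 ≤ α) (f : {f : ℝ → ℝ // V1 α f}) : ℝ →ᵇ ℝ :=
  .ofNormedAddCommGroup (fun x => rho α x * f.1 x) ((continuous_rho α).mul f.2.1) 1 fun x => by
    rw [norm_mul, Real.norm_of_nonneg (rho_pos α x).le, Real.norm_of_nonneg (f.2.mem_Icc x).1]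
    exact mul_le_one₀ (rho_le_one hα x) (f.2.mem_Icc x).1 (f.2.mem_Icc x).2

@[simp]
theorem weightedBCF_apply (hα : 0 ≤ α) (f : {f : ℝ → ℝ // V1 α f}) (x : ℝ) :
    weightedBCF hα f x = rho α x * f.1 x :=
  rfl

theorem dist_weightedBCF (hα : 0 ≤ α) (f g : {f : ℝ → ℝ // V1 α f}) :
    dist (weightedBCF hα f) (weightedBCF hα g) = ⨆ x, rho α x * |f.1 x - g.1 x| := by
  simp only [BoundedContinuousFunction.dist_eq_iSup, weightedBCF_apply, Real.dist_eq, ← mul_sub,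
    abs_mul, abs_of_pos (rho_pos _ _)]

theorem continuous_weightedBCF (hα : 0 < α) : Continuous (weightedBCF hα.le) := by
  refine continuous_iff_continuousAt.2 fun f => ?_
  rw [ContinuousAt, BoundedContinuousFunction.tendsto_iff_tendstoUniformly]
  refine Equicontinuous.tendstoUniformly_mul_of_tendsto (M := 1)
    (equicontinuous_of_abs_sub_le_abs_sq_sub fun g : {f // V1 α f} => g.2.abs_sub_le)
    (continuous_rho α) (tendsto_rho_cocompact hα) (fun g x => ?_)
    fun x => ((continuous_apply x).comp continuous_subtype_val).tendsto f
  have hg := g.2.mem_Icc x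
  have hf := f.2.mem_Icc x
  exact abs_sub_le_iff.2 ⟨by linarith [hg.2, hf.1], by linarith [hg.1, hf.2]⟩

theorem isCompact_weighted_V1 (hα : 0 < α) :
    IsCompact {F : ℝ →ᵇ ℝ | ∃ f : ℝ → ℝ, V1 α f ∧ ∀ x : ℝ, F x = rho α x * f x} := by
  have : CompactSpace {f : ℝ → ℝ // V1 α f} :=
    isCompact_iff_compactSpace.1 (isCompact_setOf_V1 hα.le)
  convert isCompact_range (continuous_weightedBCF hα)
  ext F
  constructor
  · rintro ⟨f, hf, hF⟩
    exact ⟨⟨f, hf⟩, BoundedContinuousFunction.ext fun x => (hF x).symm⟩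
  · rintro ⟨f, rfl⟩
    exact ⟨f.1, f.2, fun x => rfl⟩

end V1

/-- For every `α ∈ (0,1)`, the set `𝒱₁` is compact with respect to the weighted
uniform metric `d(f,g) = sup_x ρ(x)|f(x)-g(x)|`: the isometric image
`{ρ·f : f ∈ 𝒱₁}` inside the bounded continuous functions is compact, and every
sequence in `𝒱₁` admits a subsequence converging in the metric `d`
to an element of `𝒱₁`. -/
theorem V1_compact (α : ℝ) (hα : α ∈ Ioo (0:ℝ) 1) :
    IsCompact {F : ℝ →ᵇ ℝ | ∃ f : ℝ → ℝ, V1 α f ∧ ∀ x : ℝ, F x = rho α x * f x} ∧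
    ∀ u : ℕ → ℝ → ℝ, (∀ n, V1 α (u n)) →
      ∃ g : ℝ → ℝ, V1 α g ∧ ∃ φ : ℕ → ℕ, StrictMono φ ∧
        Tendsto (fun n => ⨆ x : ℝ, rho α x * |u (φ n) x - g x|) atTop (nhds 0) := by
  refine ⟨isCompact_weighted_V1 hα.1, fun u hu => ?_⟩
  obtain ⟨G, ⟨g, hg, hG⟩, φ, hφ, hlim⟩ := (isCompact_weighted_V1 hα.1).tendsto_subseq
    (x := fun n => weightedBCF hα.1.le ⟨u n, hu n⟩) fun n => ⟨u n, hu n, fun x => rfl⟩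
  obtain rfl : G = weightedBCF hα.1.le ⟨g, hg⟩ := BoundedContinuousFunction.ext hG
  refine ⟨g, hg, φ, hφ, ?_⟩
  simpa only [Function.comp_apply, dist_weightedBCF] using tendsto_iff_dist_tendsto_zero.1 hlim

end GSQGplane
end
end
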